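/- With g_δ(q) = inf{p : D(p‖q) ≤ δ} the lower endpoint of the binary-KL ball of radius δ around q, if 0 < δ ≤ 0.2 then g_δ is differentiable on [0.4, 0.6] and satisfies g_δ'(q) ≥ 1/2 for all q ∈ [0.4, 0.6]. -/

import Mathlib

/-!
Fix `q ∈ [0.4, 0.6]`. Since `p ↦ D(p‖q)` decreases strictly on `[0, q]` from a value above
`0.2` at `p = 0.1` to `0` at `p = q`, the intermediate value theorem gives a root
`p ∈ (0.1, q)` of `D(p‖q) = δ`, and this root is `g_δ(q)`. The implicit function theorem,
applied to `D` at `(p, q)` where `∂_p D < 0`, yields a differentiable solution branch that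
agrees with `g_δ` near `q`, with slope `-∂_q D / ∂_p D`. The bound `g_δ' ≥ 1/2` then follows
from `log x ≤ sinh (log x) = (x - x⁻¹) / 2` for `x = q / p` and `x = (1 - p) / (1 - q)`,
which reduces it to a polynomial inequality on the region `0.1 ≤ p ≤ q`, `0.4 ≤ q ≤ 0.6`.
-/

open Real Set Filter Topology

/-- Binary KL divergence `D(p‖q) = p·log(p/q) + (1-p)·log((1-p)/(1-q))`. -/
noncomputable def bernKL (p q : ℝ) : ℝ :=
  p * Real.log (p / q) + (1 - p) * Real.log ((1 - p) / (1 - q))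

/-- Lower endpoint of the binary-KL ball of radius `δ` around `q`. -/
noncomputable def gKL (δ q : ℝ) : ℝ :=
  sInf {p : ℝ | p ∈ Set.Icc (0 : ℝ) 1 ∧ bernKL p q ≤ δ}

lemma HasStrictFDerivAt.exists_hasDerivAt_implicit {f : ℝ × ℝ → ℝ}
    {f' : ℝ × ℝ →L[ℝ] ℝ} {u : ℝ × ℝ} (hf : HasStrictFDerivAt f f' u) (h₂ : f' (0, 1) ≠ 0) :
    ∃ ψ : ℝ → ℝ, HasDerivAt ψ (-f' (1, 0) / f' (0, 1)) u.1 ∧ ψ u.1 = u.2 ∧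
      ∀ᶠ x in 𝓝 u.1, f (x, ψ x) = f u := by
  have hinv : (f' ∘L .inr ℝ ℝ ℝ).IsInvertible :=
    .of_inverse (g := (f' (0, 1))⁻¹ • .id ℝ ℝ) (by ext; simp [h₂]) (by ext; simp [h₂])
  have hψ := (hf.hasStrictFDerivAt_implicitFunctionOfProdDomain hinv).hasFDerivAt.hasDerivAt
  refine ⟨_, hψ.congr_deriv ?_, ?_, hf.eventually_apply_implicitFunctionOfProdDomain hinv⟩
  · have : (f' ∘L .inr ℝ ℝ ℝ).inverse (f' (1, 0)) = f' (1, 0) / f' (0, 1) := by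
      rw [hinv.inverse_apply_eq]
      simpa [h₂] using (f'.map_smul (f' (1, 0) / f' (0, 1)) (0, 1)).symm
    simp [this, neg_div]
  · exact tendsto_nhds_unique hψ.continuousAt.tendsto
      (hf.tendsto_implicitFunctionOfProdDomain hinv)

lemma log_le_half_sub_inv {x : ℝ} (hx : 1 ≤ x) : log x ≤ (x - x⁻¹) / 2 := by
  have h := self_le_sinh_iff.2 (log_nonneg hx)
  rwa [sinh_eq, exp_neg, exp_log (by linarith)] at h

lemma log_div_sub_log_div_neg {p q : ℝ} (hp : 0 < p) (hpq : p < q) (hq : q < 1) :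
    log (p / q) - log ((1 - p) / (1 - q)) < 0 := by
  have hq : 0 < q := hp.trans hpq
  have h₁ : log (p / q) < 0 := log_neg (div_pos hp hq) ((div_lt_one hq).2 hpq)
  have h₂ : 0 < log ((1 - p) / (1 - q)) := log_pos ((one_lt_div (by linarith)).2 (by linarith))
  linarith

lemma bernKL_self (q : ℝ) : bernKL q q = 0 := by
  simp [bernKL]

lemma bernKL_eq_sub_mul_log (p : ℝ) {q : ℝ} (hq₀ : q ≠ 0) (hq₁ : q ≠ 1) :
    bernKL p q = p * log p - p * log q + ((1 - p) * log (1 - p) - (1 - p) * log (1 - q)) := by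
  have hq₁' : 1 - q ≠ 0 := sub_ne_zero.2 hq₁.symm
  unfold bernKL
  rcases eq_or_ne p 0 with rfl | hp₀
  · simp
  rcases eq_or_ne p 1 with rfl | hp₁
  · simp
  rw [log_div hp₀ hq₀, log_div (sub_ne_zero.2 hp₁.symm) hq₁']
  ring

lemma continuous_bernKL_left {q : ℝ} (hq₀ : q ≠ 0) (hq₁ : q ≠ 1) :
    Continuous fun p => bernKL p q := by
  simp only [bernKL_eq_sub_mul_log _ hq₀ hq₁]
  exact (continuous_mul_log.sub (continuous_id.mul continuous_const)).add
    ((continuous_mul_log.comp (continuous_const.sub continuous_id)).sub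
      ((continuous_const.sub continuous_id).mul continuous_const))

lemma hasStrictFDerivAt_bernKL {p q : ℝ} (hp₀ : 0 < p) (hp₁ : p < 1) (hq₀ : 0 < q)
    (hq₁ : q < 1) :
    HasStrictFDerivAt (Function.uncurry bernKL)
      ((log (p / q) - log ((1 - p) / (1 - q))) • ContinuousLinearMap.fst ℝ ℝ ℝ +
        ((1 - p) / (1 - q) - p / q) • ContinuousLinearMap.snd ℝ ℝ ℝ) (p, q) := by
  have hfst := hasStrictFDerivAt_fst (𝕜 := ℝ) (p := ((p, q) : ℝ × ℝ))
  have hsnd := hasStrictFDerivAt_snd (𝕜 := ℝ) (p := ((p, q) : ℝ × ℝ))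
  have hfst' := (hasStrictFDerivAt_const (1 : ℝ) ((p, q) : ℝ × ℝ)).sub hfst
  have hsnd' := (hasStrictFDerivAt_const (1 : ℝ) ((p, q) : ℝ × ℝ)).sub hsnd
  have h := ((hfst.mul (hfst.log hp₀.ne')).sub (hfst.mul (hsnd.log hq₀.ne'))).add
    ((hfst'.mul (hfst'.log (by simp; linarith))).sub (hfst'.mul (hsnd'.log (by simp; linarith))))
  have hU : ∀ᶠ x in 𝓝 ((p, q) : ℝ × ℝ), x.2 ∈ Ioo (0 : ℝ) 1 :=
    continuous_snd.continuousAt.eventually_mem (Ioo_mem_nhds hq₀ hq₁)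
  refine (h.congr_of_eventuallyEq ?_).congr_fderiv ?_
  · filter_upwards [hU] with x hx
    exact (bernKL_eq_sub_mul_log x.1 hx.1.ne' hx.2.ne).symm
  · refine ContinuousLinearMap.ext fun x => ?_
    have hp₁' : 1 - p ≠ 0 := by linarith
    have hq₁' : 1 - q ≠ 0 := by linarith
    simp [log_div hp₀.ne' hq₀.ne', log_div hp₁' hq₁']
    field_simp
    ring

lemma strictAntiOn_bernKL_left {q : ℝ} (hq₀ : 0 < q) (hq₁ : q < 1) :
    StrictAntiOn (fun p => bernKL p q) (Icc 0 q) := by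
  refine strictAntiOn_of_deriv_neg (convex_Icc 0 q)
    (continuous_bernKL_left hq₀.ne' hq₁.ne).continuousOn fun p hp => ?_
  rw [interior_Icc] at hp
  have hderiv : HasDerivAt (fun p => bernKL p q) (log (p / q) - log ((1 - p) / (1 - q))) p := by
    have h := (hasStrictFDerivAt_bernKL hp.1 (hp.2.trans hq₁) hq₀ hq₁).hasFDerivAt.comp_hasDerivAt
      p ((hasDerivAt_id p).prodMk (hasDerivAt_const p q))
    exact h.congr_deriv (by simp)
  rw [hderiv.deriv]
  exact log_div_sub_log_div_neg hp.1 hp.2 hq₁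

lemma exists_mem_Ioo_bernKL_eq {a q δ : ℝ} (ha : 0 ≤ a) (haq : a < q) (hq : q < 1)
    (hδ₀ : 0 < δ) (hδ : δ < bernKL a q) : ∃ p ∈ Ioo a q, bernKL p q = δ :=
  intermediate_value_Ioo' haq.le (continuous_bernKL_left (by linarith) hq.ne).continuousOn
    ⟨by rwa [bernKL_self], hδ⟩

lemma gKL_eq_of_bernKL_eq {δ p q : ℝ} (hp : 0 ≤ p) (hpq : p < q) (hq : q < 1)
    (hroot : bernKL p q = δ) : gKL δ q = p := by
  have hmem : p ∈ {x : ℝ | x ∈ Icc (0 : ℝ) 1 ∧ bernKL x q ≤ δ} :=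
    ⟨⟨hp, by linarith⟩, hroot.le⟩
  refine le_antisymm (csInf_le ⟨0, fun x hx => hx.1.1⟩ hmem) (le_csInf ⟨p, hmem⟩ ?_)
  rintro x ⟨hx, hxδ⟩
  by_contra! hxp
  have := strictAntiOn_bernKL_left (hp.trans_lt hpq) hq ⟨hx.1, by linarith⟩ ⟨hp, hpq.le⟩ hxp
  linarith

/-- The slope `-∂_q D / ∂_p D` of the level curve `D(p‖q) = δ` at `(p, q)`. -/
noncomputable def gKLSlope (p q : ℝ) : ℝ :=
  (p / q - (1 - p) / (1 - q)) / (log (p / q) - log ((1 - p) / (1 - q)))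

lemma hasDerivAt_gKL {δ p q : ℝ} (hp : 0 < p) (hpq : p < q) (hq : q < 1)
    (hroot : bernKL p q = δ) : HasDerivAt (gKL δ) (gKLSlope p q) q := by
  -- the implicit function theorem solves for the second coordinate, so put `q` first
  have hF := (hasStrictFDerivAt_bernKL hp (hpq.trans hq) (hp.trans hpq) hq).comp (q, p)
    (ContinuousLinearEquiv.prodComm ℝ ℝ ℝ).hasStrictFDerivAt
  obtain ⟨ψ, hψ, hψq, hψroot⟩ :=
    hF.exists_hasDerivAt_implicit (by simpa using (log_div_sub_log_div_neg hp hpq hq).ne)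
  simp only at hψq
  have hψ' : HasDerivAt ψ (gKLSlope p q) q := hψ.congr_deriv (by simp [gKLSlope])
  refine hψ'.congr_of_eventuallyEq ?_
  filter_upwards [hψroot, hψ.continuousAt.eventually_lt continuousAt_id (hψq ▸ hpq),
    continuousAt_const.eventually_lt hψ.continuousAt (hψq ▸ hp), eventually_lt_nhds hq]
    with x hx hψx hψ₀ hx₁
  exact gKL_eq_of_bernKL_eq hψ₀.le hψx hx₁ (by simpa [hroot] using hx)

lemma bernKL_one_tenth_gt {q : ℝ} (hq₄ : 0.4 ≤ q) (hq₆ : q ≤ 0.6) :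
    0.2 < bernKL 0.1 q := by
  have hq₀ : 0 < q := by linarith
  have hq₁ : 0 < 1 - q := by linarith
  have l₁ : log (0.1 / q) = -(2 * log 2) - log (q / 0.4) := by
    rw [show (0.1 : ℝ) / q = (2 ^ 2)⁻¹ / (q / 0.4) by field_simp; norm_num,
      log_div (by norm_num) (by positivity), log_inv, log_pow]
    norm_num
  have l₂ : log ((1 - 0.1) / (1 - q)) = log 3 - log 2 - log ((1 - q) / 0.6) := by
    rw [show (1 - 0.1 : ℝ) / (1 - q) = (3 / 2) / ((1 - q) / 0.6) by field_simp; norm_num,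
      log_div (by norm_num) (by positivity), log_div (by norm_num) (by norm_num)]
  -- tangent lines of `log` at the worst case `q = 0.4`
  have t₁ : log (q / 0.4) ≤ 5 / 2 * q - 1 :=
    (log_le_sub_one_of_pos (by positivity)).trans_eq (by ring)
  have t₂ : log ((1 - q) / 0.6) ≤ 5 / 3 * (1 - q) - 1 :=
    (log_le_sub_one_of_pos (by positivity)).trans_eq (by ring)
  rw [bernKL, l₁, l₂]
  linarith [log_two_lt_d9, log_three_gt_d9]

lemma one_half_le_gKLSlope {p q : ℝ} (hp : 0.1 ≤ p) (hpq : p < q) (hq₄ : 0.4 ≤ q)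
    (hq₆ : q ≤ 0.6) : 1 / 2 ≤ gKLSlope p q := by
  have hp₀ : 0 < p := by linarith
  have hp₁ : 0 < 1 - p := by linarith
  have hq₀ : 0 < q := by linarith
  have hq₁ : 0 < 1 - q := by linarith
  have h₁ := log_le_half_sub_inv ((one_le_div hp₀).2 hpq.le)
  have h₂ := log_le_half_sub_inv ((one_le_div hq₁).2 (by linarith : 1 - q ≤ 1 - p))
  rw [inv_div, log_div hq₀.ne' hp₀.ne'] at h₁
  rw [inv_div] at h₂
  have hpoly : (q + p) * ((1 - p) * (1 - q)) + (2 - p - q) * (p * q) ≤ 4 * (p * (1 - p)) := by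
    nlinarith [sq_nonneg (q - 0.5), sq_nonneg (p - 0.1), sq_nonneg (p - q),
      mul_nonneg (sub_nonneg.2 hp) (sub_nonneg.2 hpq.le),
      mul_nonneg (sub_nonneg.2 hp) (sub_nonneg.2 hq₄)]
  have hfrac : q / p - p / q + ((1 - p) / (1 - q) - (1 - q) / (1 - p))
      ≤ 4 * ((1 - p) / (1 - q) - p / q) := by
    rw [← sub_nonneg]
    have expand : 4 * ((1 - p) / (1 - q) - p / q)
        - (q / p - p / q + ((1 - p) / (1 - q) - (1 - q) / (1 - p)))
        = (q - p) * (4 * (p * (1 - p)) - ((q + p) * ((1 - p) * (1 - q)) + (2 - p - q) * (p * q)))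
          / (p * q * ((1 - p) * (1 - q))) := by
      field_simp
      ring
    rw [expand]
    exact div_nonneg (mul_nonneg (by linarith) (by linarith)) (by positivity)
  rw [gKLSlope, le_div_iff_of_neg (log_div_sub_log_div_neg hp₀ hpq (by linarith)),
    log_div hp₀.ne' hq₀.ne']
  linarith

/-- For `0 < δ ≤ 0.2`, `g_δ` is differentiable on `[0.4, 0.6]` with
`g_δ'(q) ≥ 1/2` there. -/
theorem stmt_8 (δ : ℝ) (hδ0 : 0 < δ) (hδ : δ ≤ 0.2) :
    ∀ q ∈ Set.Icc (0.4 : ℝ) 0.6,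
      DifferentiableAt ℝ (gKL δ) q ∧ (1 / 2 : ℝ) ≤ deriv (gKL δ) q := by
  rintro q ⟨hq₄, hq₆⟩
  obtain ⟨p, ⟨hp, hpq⟩, hroot⟩ := exists_mem_Ioo_bernKL_eq (by norm_num) (by linarith)
    (by linarith) hδ0 (hδ.trans_lt (bernKL_one_tenth_gt hq₄ hq₆))
  have hg := hasDerivAt_gKL (by linarith) hpq (by linarith) hroot
  exact ⟨hg.differentiableAt, hg.deriv ▸ one_half_le_gKLSlope hp.le hpq hq₄ hq₆⟩
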